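/- Let n ≥ 1, let A, B ∈ M_n(ℤ) be non-singular, and let T ∈ M_n(ℚ). Then T·G_A ⊆ G_B if and only if for every natural number k there exists a natural number l such that the rational matrix B^l · T · A^(−k) has all entries in ℤ. In particular, if T·G_A ⊆ G_B then there exists l ∈ ℕ with B^l T ∈ M_n(ℤ). -/
import Mathlib


open Matrix Polynomial

/-- The image of an integer matrix in `M_n(ℚ)`. -/
noncomputable def Qmat {n : ℕ} (A : Matrix (Fin n) (Fin n) ℤ) : Matrix (Fin n) (Fin n) ℚ :=
  A.map (Int.cast : ℤ → ℚ)

/-- `G_A = {A^k x : x ∈ ℤ^n, k ∈ ℤ} ⊆ ℚ^n`, negative powers taken in `M_n(ℚ)`. -/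
noncomputable def GA {n : ℕ} (A : Matrix (Fin n) (Fin n) ℤ) : Set (Fin n → ℚ) :=
  {w | ∃ (x : Fin n → ℤ) (k : ℤ), w = (Qmat A ^ k) *ᵥ (fun i => (x i : ℚ))}

/-- `G_A` as an additive subgroup of `ℚ^n` (it is closed under the group operations,
so the closure has carrier exactly `G_A`). -/
noncomputable def GAgrp {n : ℕ} (A : Matrix (Fin n) (Fin n) ℤ) : AddSubgroup (Fin n → ℚ) :=
  AddSubgroup.closure (GA A)

/-- The subring `ℤ[1/d] = {a / d^m : a ∈ ℤ, m ∈ ℕ}` of `ℚ`. -/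
def Zinv (d : ℤ) : Set ℚ :=
  {q | ∃ (a : ℤ) (m : ℕ), q = (a : ℚ) / (d : ℚ) ^ m}

/-- The radical of an integer: the product of its distinct positive prime divisors. -/
def rad (N : ℤ) : ℕ := ∏ p ∈ N.natAbs.primeFactors, p

/-- A rational matrix has all entries in `ℤ`. -/
def intEntries {n : ℕ} (T : Matrix (Fin n) (Fin n) ℚ) : Prop :=
  ∀ i j, ∃ m : ℤ, T i j = (m : ℚ)

lemma Qmat_eq {n : ℕ} (M : Matrix (Fin n) (Fin n) ℤ) :
    Qmat M = (Int.castRingHom ℚ).mapMatrix M := rfl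

lemma Qmat_mulVec {n : ℕ} (M : Matrix (Fin n) (Fin n) ℤ) (x : Fin n → ℤ) :
    Qmat M *ᵥ (fun i => (x i : ℚ)) = fun i => ((M *ᵥ x) i : ℚ) := by
  funext i
  simp [Qmat, Matrix.mulVec, dotProduct]

lemma Qmat_pow {n : ℕ} (M : Matrix (Fin n) (Fin n) ℤ) (m : ℕ) :
    Qmat (M ^ m) = Qmat M ^ m := by
  rw [Qmat_eq, Qmat_eq, map_pow]

lemma Qmat_det_isUnit {n : ℕ} (M : Matrix (Fin n) (Fin n) ℤ) (h : M.det ≠ 0) :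
    IsUnit (Qmat M).det := by
  rw [Qmat_eq, ← RingHom.map_det, isUnit_iff_ne_zero]
  simpa using h

lemma GA_exists {n : ℕ} (A : Matrix (Fin n) (Fin n) ℤ) {w : Fin n → ℚ} (hw : w ∈ GA A) :
    ∃ (m : ℕ) (x : Fin n → ℤ), w = (Qmat A) ^ (-(m : ℤ)) *ᵥ (fun i => (x i : ℚ)) := by
  obtain ⟨x, k, rfl⟩ := hw
  rcases le_or_gt 0 k with hk | hk
  · refine ⟨0, A ^ k.toNat *ᵥ x, ?_⟩
    rw [show (-(0 : ℕ) : ℤ) = 0 by simp, zpow_zero, Matrix.one_mulVec,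
      show k = (k.toNat : ℤ) by omega, zpow_natCast, ← Qmat_pow, Qmat_mulVec]
    rw [Int.toNat_natCast]
  · exact ⟨(-k).toNat, x, by rw [show (-(((-k).toNat : ℕ) : ℤ)) = k by omega]⟩

lemma intEntries_exists {n : ℕ} {M : Matrix (Fin n) (Fin n) ℚ} (h : intEntries M) :
    ∃ M' : Matrix (Fin n) (Fin n) ℤ, M = Qmat M' := by
  choose f hf using h
  exact ⟨Matrix.of f, by ext i j; simpa [Qmat] using hf i j⟩

theorem stmt6 (n : ℕ) (hn : 1 ≤ n) (A B : Matrix (Fin n) (Fin n) ℤ)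
    (hA : A.det ≠ 0) (hB : B.det ≠ 0) (T : Matrix (Fin n) (Fin n) ℚ) :
    ((fun w => T *ᵥ w) '' GA A ⊆ GA B ↔
      ∀ k : ℕ, ∃ l : ℕ, intEntries (Qmat B ^ (l : ℕ) * T * Qmat A ^ (-(k : ℤ)))) ∧
    ((fun w => T *ᵥ w) '' GA A ⊆ GA B →
      ∃ l : ℕ, intEntries (Qmat B ^ (l : ℕ) * T)) := by
  have hBu : IsUnit (Qmat B).det := Qmat_det_isUnit B hB
  have key : (fun w => T *ᵥ w) '' GA A ⊆ GA B ↔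
      ∀ k : ℕ, ∃ l : ℕ, intEntries (Qmat B ^ (l : ℕ) * T * Qmat A ^ (-(k : ℤ))) := by
    constructor
    · intro hsub k
      have h1 : ∀ j : Fin n, ∃ (x : Fin n → ℤ) (c : ℤ),
          T *ᵥ ((Qmat A) ^ (-(k : ℤ)) *ᵥ (fun i => ((Pi.single j (1 : ℤ) : Fin n → ℤ) i : ℚ)))
            = (Qmat B) ^ c *ᵥ (fun i => (x i : ℚ)) := by
        intro j
        exact hsub ⟨_, ⟨Pi.single j 1, -(k : ℤ), rfl⟩, rfl⟩
      choose x c hc using h1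
      refine ⟨Finset.univ.sup (fun j => (-(c j)).toNat), ?_⟩
      set l : ℕ := Finset.univ.sup (fun j => (-(c j)).toNat) with hldef
      have hMj : ∀ j : Fin n, ∃ y : Fin n → ℤ,
          (Qmat B ^ (l : ℕ) * T * Qmat A ^ (-(k : ℤ))) *ᵥ
            (fun i => ((Pi.single j (1 : ℤ) : Fin n → ℤ) i : ℚ)) = fun i => (y i : ℚ) := by
        intro j
        have hle : (-(c j)).toNat ≤ l := hldef ▸ Finset.le_sup (f := fun j => (-(c j)).toNat) (Finset.mem_univ j)
        have hge : (0 : ℤ) ≤ (l : ℤ) + c j := by omega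
        refine ⟨B ^ ((l : ℤ) + c j).toNat *ᵥ x j, ?_⟩
        rw [← Matrix.mulVec_mulVec, ← Matrix.mulVec_mulVec, hc j,
          Matrix.mulVec_mulVec, ← zpow_natCast (Qmat B) l,
          ← Matrix.zpow_add hBu, show (l : ℤ) + c j = (((l : ℤ) + c j).toNat : ℤ) by omega,
          zpow_natCast, ← Qmat_pow, Qmat_mulVec]
        rw [Int.toNat_natCast]
      intro i j
      obtain ⟨y, hy⟩ := hMj j
      refine ⟨y i, ?_⟩
      have hcast : (fun i => ((Pi.single j (1 : ℤ) : Fin n → ℤ) i : ℚ))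
          = Pi.single j (1 : ℚ) := by
        funext i'
        simp [Pi.single_apply, apply_ite (Int.cast : ℤ → ℚ)]
      rw [hcast, Matrix.mulVec_single] at hy
      have h2 := congrFun hy i
      simpa using h2
    · intro h w hw
      obtain ⟨v, hv, rfl⟩ := hw
      obtain ⟨m, x, rfl⟩ := GA_exists A hv
      obtain ⟨l, hl⟩ := h m
      obtain ⟨M', hM'⟩ := intEntries_exists hl
      refine ⟨M' *ᵥ x, -(l : ℤ), ?_⟩
      have hinv : Qmat B ^ (-(l : ℤ)) * (Qmat B ^ (l : ℕ)) = 1 := by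
        rw [← zpow_natCast (Qmat B) l, ← Matrix.zpow_add hBu, neg_add_cancel,
          zpow_zero]
      rw [← Qmat_mulVec, ← hM', Matrix.mulVec_mulVec, ← mul_assoc, ← mul_assoc, hinv,
        one_mul, ← Matrix.mulVec_mulVec]
  refine ⟨key, fun hsub => ?_⟩
  obtain ⟨l, hl⟩ := key.mp hsub 0
  refine ⟨l, ?_⟩
  have : Qmat A ^ (-((0 : ℕ) : ℤ)) = 1 := by simp
  rwa [this, mul_one] at hl
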